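/- arXiv:1811.06190 — 4 statements merged into one kernel-verified Lean document; each statement's English description precedes it below -/
import Mathlib

section
/- Let A be a ring, let M be an A-module whose underlying additive group is torsion-free, let D ⊆ M be an A-submodule, and let c be a positive integer with c·M ⊆ D. Assume that α(D) = D for every A-module automorphism α of M. Then the restriction map φ : Aut_A(M) → Aut_A(D), α ↦ α|_D, is an injective group homomorphism whose image is exactly the stabiliser {γ ∈ Aut_A(D) : γ(c·M) = c·M} of the subgroup c·M = {c·m : m ∈ M} ⊆ D. -/
/-!
Multiplication by `c` is an injective `A`-linear map `ι : M → D` with image `c • M`. Restricting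
`α` to `D` commutes with `ι`, i.e. `α|_D ∘ ι = ι ∘ α`; this gives injectivity and shows that `α|_D`
stabilises `c • M`. Conversely, an automorphism `γ` of `D` stabilising `c • M` transports along
`ι : M ≃ c • M` to an automorphism `α` of `M` with `ι ∘ α = γ ∘ ι`, so `c • α x = c • γ x` for
`x ∈ D`, and cancelling `c` gives `α|_D = γ`.
-/

namespace Submodule

variable {A M : Type*} [Ring A] [AddCommGroup M] [Module A M]

def restrictAut (p : Submodule A M) (hp : ∀ α : M ≃ₗ[A] M, p.map (α : M →ₗ[A] M) = p) :
    (M ≃ₗ[A] M) →* (p ≃ₗ[A] p) where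
  toFun α := α.ofSubmodules p p (hp α)
  map_one' := rfl
  map_mul' _ _ := rfl

@[simp]
lemma coe_restrictAut_apply (p : Submodule A M) (hp : ∀ α : M ≃ₗ[A] M, p.map (α : M →ₗ[A] M) = p)
    (α : M ≃ₗ[A] M) (x : p) : (restrictAut p hp α x : M) = α x :=
  rfl

def zsmulCodRestrict (p : Submodule A M) (n : ℤ) (hn : ∀ m : M, n • m ∈ p) : M →ₗ[A] p :=
  (n • LinearMap.id).codRestrict p hn

section zsmulCodRestrict

variable {p : Submodule A M} {n : ℤ} (hn : ∀ m : M, n • m ∈ p)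

@[simp]
lemma coe_zsmulCodRestrict_apply (m : M) : (zsmulCodRestrict p n hn m : M) = n • m :=
  rfl

lemma zsmulCodRestrict_injective (h : IsSMulRegular M n) :
    Function.Injective (zsmulCodRestrict p n hn) :=
  fun _ _ hxy ↦ h (congrArg Subtype.val hxy)

lemma coe_range_zsmulCodRestrict :
    (LinearMap.range (zsmulCodRestrict p n hn) : Set p) = {x : p | ∃ m : M, (x : M) = n • m} := by
  ext x
  simp only [SetLike.mem_coe, LinearMap.mem_range, Set.mem_ofPred_eq, Subtype.ext_iff,
    coe_zsmulCodRestrict_apply, eq_comm]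

lemma zsmulCodRestrict_coe (x : p) : zsmulCodRestrict p n hn x = n • x :=
  rfl

variable (hp : ∀ α : M ≃ₗ[A] M, p.map (α : M →ₗ[A] M) = p)

lemma restrictAut_comp_zsmulCodRestrict (α : M ≃ₗ[A] M) :
    (restrictAut p hp α : p →ₗ[A] p) ∘ₗ zsmulCodRestrict p n hn =
      zsmulCodRestrict p n hn ∘ₗ α := by
  ext m
  exact map_zsmul α n m

lemma map_range_zsmulCodRestrict_restrictAut (α : M ≃ₗ[A] M) :
    (LinearMap.range (zsmulCodRestrict p n hn)).map (restrictAut p hp α : p →ₗ[A] p) =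
      LinearMap.range (zsmulCodRestrict p n hn) := by
  rw [← LinearMap.range_comp, restrictAut_comp_zsmulCodRestrict,
    LinearMap.range_comp_of_range_eq_top _ (LinearEquiv.range α)]

lemma restrictAut_injective (hn : ∀ m : M, n • m ∈ p) (h : IsSMulRegular M n) :
    Function.Injective (restrictAut p hp) := by
  intro α β hαβ
  apply LinearEquiv.toLinearMap_injective
  rw [← LinearMap.cancel_left (zsmulCodRestrict_injective hn h),
    ← restrictAut_comp_zsmulCodRestrict hn hp, ← restrictAut_comp_zsmulCodRestrict hn hp, hαβ]

lemma exists_restrictAut_eq (h : IsSMulRegular M n) (γ : p ≃ₗ[A] p)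
    (hγ : (LinearMap.range (zsmulCodRestrict p n hn)).map (γ : p →ₗ[A] p) =
      LinearMap.range (zsmulCodRestrict p n hn)) :
    ∃ α : M ≃ₗ[A] M, restrictAut p hp α = γ := by
  set e := LinearEquiv.ofInjective _ (zsmulCodRestrict_injective hn h)
  let α : M ≃ₗ[A] M := e.trans ((γ.ofSubmodules _ _ hγ).trans e.symm)
  have hα : ∀ m, zsmulCodRestrict p n hn (α m) = γ (zsmulCodRestrict p n hn m) := fun m ↦ by
    change ((e (α m) : _) : p) = _
    simp [α, e]
  refine ⟨α, LinearEquiv.ext fun x ↦ Subtype.ext (h ?_)⟩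
  change ((zsmulCodRestrict p n hn (α x) : p) : M) = n • (γ x : M)
  rw [hα, zsmulCodRestrict_coe, map_zsmul, coe_smul_of_tower]

lemma range_restrictAut (h : IsSMulRegular M n) :
    Set.range (restrictAut p hp) = {γ : p ≃ₗ[A] p |
      (LinearMap.range (zsmulCodRestrict p n hn)).map (γ : p →ₗ[A] p) =
        LinearMap.range (zsmulCodRestrict p n hn)} := by
  ext γ
  constructor
  · rintro ⟨α, rfl⟩
    exact map_range_zsmulCodRestrict_restrictAut hn hp α
  · exact exists_restrictAut_eq hn hp h γ

end zsmulCodRestrict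

end Submodule

open Submodule in
/-- Let `M` be a module over a ring `A` with torsion-free additive group,
`D` a submodule invariant under all `A`-automorphisms of `M`, and `c > 0` with `c·M ⊆ D`.
Then the restriction map `Aut_A(M) → Aut_A(D)` is an injective group homomorphism whose
image is exactly the stabiliser of the subgroup `c·M ⊆ D`. -/
theorem restriction_injective_range_eq_stabilizer
    {A M : Type*} [Ring A] [AddCommGroup M] [Module A M]
    (htf : ∀ (n : ℤ) (m : M), n ≠ 0 → n • m = 0 → m = 0)
    (D : Submodule A M) (c : ℕ) (hc : 0 < c)
    (hcM : ∀ m : M, (c : ℤ) • m ∈ D)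
    (hinv : ∀ α : M ≃ₗ[A] M, D.map (α : M →ₗ[A] M) = D) :
    ∃ φ : (M ≃ₗ[A] M) →* (D ≃ₗ[A] D),
      (∀ (α : M ≃ₗ[A] M) (x : D), ((φ α x : D) : M) = α (x : M)) ∧
      Function.Injective φ ∧
      Set.range φ =
        {γ : D ≃ₗ[A] D |
          (fun x : D => γ x) '' {x : D | ∃ m : M, (x : M) = (c : ℤ) • m} =
            {x : D | ∃ m : M, (x : M) = (c : ℤ) • m}} := by
  have hreg : IsSMulRegular M (c : ℤ) := fun x y hxy ↦
    sub_eq_zero.1 <| htf _ _ (Int.natCast_ne_zero.2 hc.ne') <| by rw [smul_sub, sub_eq_zero]; exact hxy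
  refine ⟨restrictAut D hinv, coe_restrictAut_apply D hinv,
    restrictAut_injective hinv hcM hreg, ?_⟩
  rw [range_restrictAut hcM hinv hreg, ← coe_range_zsmulCodRestrict hcM]
  ext γ
  rw [Set.mem_ofPred_eq, Set.mem_ofPred_eq, ← SetLike.coe_set_eq, Submodule.map_coe]
  rfl
end

section
/- Let A be a ring, let M and M̂ be A-modules whose underlying additive groups are torsion-free, let D ⊆ M and D̂ ⊆ M̂ be A-submodules, and let c be a positive integer with c·M ⊆ D and c·M̂ ⊆ D̂. Assume that every A-module isomorphism M → M̂ maps D onto D̂. Then M and M̂ are isomorphic as A-modules if and only if there exists an A-module isomorphism γ : D → D̂ with γ(c·M) = c·M̂, where c·M = {c·m : m ∈ M} ⊆ D and c·M̂ = {c·m : m ∈ M̂} ⊆ D̂. -/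
/-!
Multiplication by `c` embeds `M` into `D` and `M̂` into `M̂` (torsion-freeness), with images `c·M`
and `c·M̂`. An isomorphism `e : M ≃ M̂` restricts to `D ≃ D̂`, since it maps `D` onto `D̂`, and commutes with multiplication
by `c`. Conversely, if `γ : D ≃ D̂` maps `c·M` onto `c·M̂`, then `m ↦ γ(c·m)` and `m ↦ c·m` are
injective maps `M → M̂`, `M̂ → M̂` with the same range, so `M ≃ M̂`.
-/

open LinearMap

section

variable {A M N P : Type*} [Ring A] [AddCommGroup M] [Module A M] [AddCommGroup N] [Module A N]
  [AddCommGroup P] [Module A P]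

noncomputable def LinearEquiv.ofRangeEq (f : M →ₗ[A] P) (g : N →ₗ[A] P) (hf : Function.Injective f)
    (hg : Function.Injective g) (h : range f = range g) : M ≃ₗ[A] N :=
  (ofInjective f hf).trans ((ofEq _ _ h).trans (ofInjective g hg).symm)

theorem coe_range_zsmul_id (n : ℤ) :
    (range (n • LinearMap.id : M →ₗ[A] M) : Set M) = {y | ∃ m, y = n • m} := by
  ext y
  simp [eq_comm]

theorem injective_zsmul_id {n : ℤ} (hM : ∀ m : M, n • m = 0 → m = 0) :
    Function.Injective (n • LinearMap.id : M →ₗ[A] M) :=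
  (injective_iff_map_eq_zero _).2 hM

section

variable {D : Submodule A M} {E : Submodule A N} (n : ℤ) (hD : ∀ m : M, n • m ∈ D)

theorem image_zsmul_eq_iff_range_eq (γ : D ≃ₗ[A] E) :
    (fun x : D => ((γ x : E) : N)) '' {x : D | ∃ m : M, (x : M) = n • m} = {y | ∃ m, y = n • m} ↔
      range (E.subtype ∘ₗ γ.toLinearMap ∘ₗ (n • LinearMap.id).codRestrict D hD) =
        range (n • LinearMap.id : N →ₗ[A] N) := by
  have hrange : Set.range ((n • LinearMap.id).codRestrict D hD) =
      {x : D | ∃ m : M, (x : M) = n • m} := by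
    ext x
    simp [Subtype.ext_iff, eq_comm]
  conv_rhs => rw [← SetLike.coe_set_eq, coe_range_zsmul_id, coe_range]
  rw [coe_comp, Set.range_comp, coe_comp, Set.range_comp, hrange, Set.image_image]
  rfl

theorem range_submoduleMap_comp_codRestrict (e : M ≃ₗ[A] N) (he : D.map (e : M →ₗ[A] N) = E) :
    range (E.subtype ∘ₗ ((e.submoduleMap D).trans (LinearEquiv.ofEq _ _ he)).toLinearMap ∘ₗ
      (n • LinearMap.id).codRestrict D hD) = range (n • LinearMap.id : N →ₗ[A] N) := by
  have hcomm : E.subtype ∘ₗ ((e.submoduleMap D).trans (LinearEquiv.ofEq _ _ he)).toLinearMap ∘ₗ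
      (n • LinearMap.id).codRestrict D hD = (n • LinearMap.id) ∘ₗ e.toLinearMap := by
    ext m
    simp
  rw [hcomm, range_comp_of_range_eq_top _ e.range]

end

end

theorem isomorphic_iff_exists_submodule_iso_mapping_cM_general
    {A M Mh : Type*} [Ring A] [AddCommGroup M] [Module A M]
    [AddCommGroup Mh] [Module A Mh]
    (htfM : ∀ (n : ℤ) (m : M), n ≠ 0 → n • m = 0 → m = 0)
    (htfMh : ∀ (n : ℤ) (m : Mh), n ≠ 0 → n • m = 0 → m = 0)
    (D : Submodule A M) (Dh : Submodule A Mh) (c : ℕ) (hc : 0 < c)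
    (hcM : ∀ m : M, (c : ℤ) • m ∈ D)
    (hinv : ∀ e : M ≃ₗ[A] Mh, D.map (e : M →ₗ[A] Mh) = Dh) :
    Nonempty (M ≃ₗ[A] Mh) ↔
      ∃ γ : D ≃ₗ[A] Dh,
        (fun x : D => ((γ x : Dh) : Mh)) '' {x : D | ∃ m : M, (x : M) = (c : ℤ) • m} =
          {y : Mh | ∃ m : Mh, y = (c : ℤ) • m} := by
  simp_rw [image_zsmul_eq_iff_range_eq _ hcM]
  have hc : (c : ℤ) ≠ 0 := by exact_mod_cast hc.ne'
  constructor
  · rintro ⟨e⟩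
    exact ⟨_, range_submoduleMap_comp_codRestrict _ hcM e (hinv e)⟩
  · rintro ⟨γ, hγ⟩
    have hcD : Function.Injective (((c : ℤ) • LinearMap.id).codRestrict D hcM) :=
      (injective_codRestrict_iff _).2 (injective_zsmul_id (htfM _ · hc))
    exact ⟨LinearEquiv.ofRangeEq _ _ (Dh.injective_subtype.comp (γ.injective.comp hcD))
      (injective_zsmul_id (htfMh _ · hc)) hγ⟩

/-- Let `M`, `M̂` be `A`-modules with torsion-free additive groups,
`D ⊆ M`, `D̂ ⊆ M̂` submodules with `c·M ⊆ D`, `c·M̂ ⊆ D̂` for a positive integer `c`, and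
suppose every `A`-isomorphism `M → M̂` maps `D` onto `D̂`. Then `M ≅ M̂` iff there is an
`A`-isomorphism `γ : D → D̂` with `γ(c·M) = c·M̂`. -/
theorem isomorphic_iff_exists_submodule_iso_mapping_cM
    {A M Mh : Type*} [Ring A] [AddCommGroup M] [Module A M]
    [AddCommGroup Mh] [Module A Mh]
    (htfM : ∀ (n : ℤ) (m : M), n ≠ 0 → n • m = 0 → m = 0)
    (htfMh : ∀ (n : ℤ) (m : Mh), n ≠ 0 → n • m = 0 → m = 0)
    (D : Submodule A M) (Dh : Submodule A Mh) (c : ℕ) (hc : 0 < c)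
    (hcM : ∀ m : M, (c : ℤ) • m ∈ D) (hcMh : ∀ m : Mh, (c : ℤ) • m ∈ Dh)
    (hinv : ∀ e : M ≃ₗ[A] Mh, D.map (e : M →ₗ[A] Mh) = Dh) :
    Nonempty (M ≃ₗ[A] Mh) ↔
      ∃ γ : D ≃ₗ[A] Dh,
        (fun x : D => ((γ x : Dh) : Mh)) '' {x : D | ∃ m : M, (x : M) = (c : ℤ) • m} =
          {y : Mh | ∃ m : Mh, y = (c : ℤ) • m} :=
  isomorphic_iff_exists_submodule_iso_mapping_cM_general htfM htfMh D Dh c hc hcM hinv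
end

section
/- Let K be a number field with ring of integers 𝓞_K, let O ⊆ 𝓞_K be a subring whose additive group has finite index in the additive group of 𝓞_K, let V be a K-vector space, and let M be a finitely generated additive subgroup of V with a·m ∈ M for all a ∈ O and m ∈ M. Then among the additive subgroups N of M that satisfy a·n ∈ N for all a ∈ 𝓞_K, n ∈ N, and that have finite index in M, there is a greatest one: there exists such a subgroup L ⊆ M of finite index, stable under 𝓞_K, which contains every 𝓞_K-stable subgroup of finite index in M. -/
/-!
The greatest `𝓞 K`-stable subgroup of finite index in `M` is its core `{x | 𝓞 K • x ⊆ M}`, which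
contains every `𝓞 K`-stable subgroup of `M`. If `n = [𝓞 K : O]`, then `n • 𝓞 K ⊆ O`, so `n • M`
lies in the core; thus `M` modulo the core is a finitely generated abelian group killed by `n`,
hence finite.
-/

open NumberField

namespace AddSubgroup

theorem relIndex_ne_zero_of_nsmul_mem {G : Type*} [AddCommGroup G] {H K : AddSubgroup G}
    (hK : K.FG) {n : ℕ} (hn : n ≠ 0) (h : ∀ x ∈ K, n • x ∈ H) : H.relIndex K ≠ 0 := by
  have : AddGroup.FG K := (AddGroup.fg_iff_addSubgroup_fg K).mpr hK
  have : AddGroup.FG (K ⧸ H.addSubgroupOf K) :=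
    AddGroup.fg_of_surjective (QuotientAddGroup.mk'_surjective _)
  have hexp : AddMonoid.ExponentExists (K ⧸ H.addSubgroupOf K) := by
    refine ⟨n, Nat.pos_of_ne_zero hn, ?_⟩
    intro q
    obtain ⟨⟨x, hx⟩, rfl⟩ := QuotientAddGroup.mk_surjective q
    rw [← QuotientAddGroup.mk_nsmul, QuotientAddGroup.eq_zero_iff]
    exact h x hx
  have : Finite (K ⧸ H.addSubgroupOf K) :=
    AddCommGroup.finite_of_fg_isAddTorsion _ (ExponentExists.isAddTorsion hexp)
  exact index_ne_zero_of_finite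

variable {R V : Type*} [Ring R] [AddCommGroup V] [Module R V]

variable (R) in
def submoduleCore (M : AddSubgroup V) : Submodule R V where
  carrier := {x | ∀ a : R, a • x ∈ M}
  zero_mem' a := by simpa only [smul_zero] using M.zero_mem
  add_mem' hx hy a := by simpa only [smul_add] using M.add_mem (hx a) (hy a)
  smul_mem' b x hx a := by simpa only [smul_smul] using hx (a * b)

variable {M N : AddSubgroup V}

theorem submoduleCore_le : (M.submoduleCore R).toAddSubgroup ≤ M :=
  fun x hx => by simpa only [one_smul] using hx 1

theorem le_submoduleCore (hNM : N ≤ M) (hN : ∀ a : R, ∀ x ∈ N, a • x ∈ N) :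
    N ≤ (M.submoduleCore R).toAddSubgroup :=
  fun x hx a => hNM (hN a x hx)

variable {O : AddSubgroup R}

theorem index_nsmul_mem_submoduleCore (hO : O.index ≠ 0)
    (hMO : ∀ a ∈ O, ∀ m ∈ M, a • m ∈ M) {m : V} (hm : m ∈ M) :
    O.index • m ∈ M.submoduleCore R := by
  have : O.FiniteIndex := ⟨hO⟩
  intro a
  rw [smul_comm, ← smul_assoc]
  exact hMO _ (O.nsmul_index_mem a) m hm

theorem relIndex_submoduleCore_ne_zero (hM : M.FG) (hO : O.index ≠ 0)
    (hMO : ∀ a ∈ O, ∀ m ∈ M, a • m ∈ M) :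
    (M.submoduleCore R).toAddSubgroup.relIndex M ≠ 0 :=
  relIndex_ne_zero_of_nsmul_mem hM hO fun _ hm => index_nsmul_mem_submoduleCore hO hMO hm

end AddSubgroup

/-- Let `K` be a number field with ring of integers `𝓞 K`, `O ⊆ 𝓞 K` an
order (a subring of finite additive index), `V` a `K`-vector space and `M ⊆ V` a finitely
generated additive subgroup stable under `O`. Then among the `𝓞 K`-stable subgroups of
finite index in `M` there is a greatest one. -/
theorem exists_greatest_maximalOrder_stable_subgroup
    (K : Type*) [Field K] [NumberField K]
    (O : Subring (𝓞 K)) (hO : O.toAddSubgroup.index ≠ 0)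
    (V : Type*) [AddCommGroup V] [Module K V]
    (M : AddSubgroup V) (hMfg : M.FG)
    (hMO : ∀ a ∈ O, ∀ m ∈ M, (algebraMap (𝓞 K) K a) • m ∈ M) :
    ∃ L : AddSubgroup V, L ≤ M ∧
      (∀ (a : 𝓞 K), ∀ x ∈ L, (algebraMap (𝓞 K) K a) • x ∈ L) ∧
      L.relIndex M ≠ 0 ∧
      ∀ N : AddSubgroup V, N ≤ M →
        (∀ (a : 𝓞 K), ∀ x ∈ N, (algebraMap (𝓞 K) K a) • x ∈ N) →
        N.relIndex M ≠ 0 → N ≤ L := by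
  let _ : Module (𝓞 K) V := Module.compHom V (algebraMap (𝓞 K) K)
  exact ⟨(M.submoduleCore (𝓞 K)).toAddSubgroup, AddSubgroup.submoduleCore_le,
    fun a _ hx => (M.submoduleCore (𝓞 K)).smul_mem a hx,
    M.relIndex_submoduleCore_ne_zero (O := O.toAddSubgroup) hMfg hO hMO,
    fun _ hNM hN _ => AddSubgroup.le_submoduleCore hNM hN⟩
end

section
/- Let 𝓞 be the ring of integers of a number field and let Q be a finitely generated 𝓞-module whose torsion submodule T(Q) is finite of cardinality t; let Q̂ = Q/T(Q) and let r be the rank of Q̂, i.e. r = rank_ℤ(Q)/rank_ℤ(𝓞). Let v be a positive integer. If Q̂ has exactly u 𝓞-submodules that are free 𝓞-modules of index v, then Q has exactly u·t^r 𝓞-submodules that are free 𝓞-modules of index v·t. -/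
/-!
A free submodule `F ⊆ Q` meets the torsion `T` trivially, so it maps isomorphically onto its
image `P` in `Q̂ = Q/T`, and `[Q : F] = [Q̂ : P] · |T|`. Conversely, the submodules of `Q` lying
over a fixed free `P` and meeting `T` trivially are the images of the sections of `Q → Q̂` over
`P`; as `P` is projective these form a torsor under `Hom(P, T) ≅ T^r`, where `r` is the rank of
`P`, which equals that of `Q̂` because `P` has finite index.
-/

open NumberField Module Submodule

theorem Nat.card_subtype_eq_mul_of_fiber_equiv {α β γ : Type*} (f : α → β) {p d : α → Prop}
    {q : β → Prop} (h : ∀ x, p x ↔ d x ∧ q (f x))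
    (e : ∀ y, q y → Nonempty ({x // d x ∧ f x = y} ≃ γ)) :
    Nat.card {x // p x} = Nat.card {y // q y} * Nat.card γ := by
  let toSigma : {x // p x} ≃ Σ y : {y // q y}, {x // d x ∧ f x = y} :=
    { toFun x := ⟨⟨f x, ((h x).1 x.2).2⟩, x, ((h x).1 x.2).1, rfl⟩
      invFun y := ⟨y.2, (h y.2).2 ⟨y.2.2.1, (congrArg q y.2.2.2).mpr y.1.2⟩⟩
      left_inv _ := rfl
      right_inv y := Sigma.subtype_ext (Subtype.ext y.2.2.2) rfl }
  rw [← Nat.card_prod, Nat.card_congr <| toSigma.trans <|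
    (Equiv.sigmaCongrRight fun y : {y // q y} => (e y y.2).some).trans (Equiv.sigmaEquivProd _ _)]

theorem AddSubgroup.index_eq_index_map_mul_card_ker {G G' : Type*} [AddCommGroup G] [AddGroup G']
    {f : G →+ G'} (hf : Function.Surjective f) {H : AddSubgroup G} (hH : Disjoint H f.ker) :
    H.index = (H.map f).index * Nat.card f.ker := by
  rw [index_map, f.range_eq_top_of_surjective hf, index_top, mul_one,
    ← relIndex_mul_index (le_sup_left : H ≤ H ⊔ f.ker), mul_comm, relIndex_sup_left,
    ← inf_relIndex_right, hH.eq_bot, relIndex_bot_left]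

theorem Submodule.disjoint_torsion_of_free {R M : Type*} [CommRing R] [IsDomain R]
    [AddCommGroup M] [Module R M] (F : Submodule R M) [Free R F] : Disjoint F (torsion R M) := by
  refine disjoint_def.mpr fun x hxF ⟨a, hax⟩ => ?_
  have : (⟨x, hxF⟩ : F) ∈ torsion R F := ⟨a, Subtype.ext hax⟩
  rw [isTorsionFree_iff_torsion_eq_bot.mp inferInstance] at this
  simpa using this

theorem Submodule.finrank_int_eq_of_index_ne_zero {M : Type*} [AddCommGroup M]
    [Module.Finite ℤ M] (N : Submodule ℤ M) (hN : N.toAddSubgroup.index ≠ 0) :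
    finrank ℤ N = finrank ℤ M := by
  have : N.toAddSubgroup.FiniteIndex := ⟨hN⟩
  have : Finite (M ⧸ N) := AddSubgroup.finite_quotient_of_finiteIndex
  rw [← N.finrank_quotient_add_finrank, finrank_eq_zero_iff_isTorsion (M := M ⧸ N) |>.mpr
    (isAddTorsion_iff_isTorsion_int.mp isAddTorsion_of_finite), zero_add]

theorem Submodule.finrank_mul_finrank_int_eq_of_index_ne_zero {R M : Type*} [CommRing R]
    [Nontrivial R] [Free ℤ R] [AddCommGroup M] [Module R M] [Module.Finite ℤ M]
    (P : Submodule R M) [Free R P] (hP : P.toAddSubgroup.index ≠ 0) :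
    finrank R P * finrank ℤ R = finrank ℤ M := by
  rw [mul_comm, finrank_mul_finrank]
  exact (P.restrictScalars ℤ).finrank_int_eq_of_index_ne_zero hP

namespace LinearMap

variable {R M N : Type*} [Ring R] [AddCommGroup M] [AddCommGroup N] [Module R M] [Module R N]
  (f : M →ₗ[R] N)

theorem index_eq_index_map_mul_card_ker (hf : Function.Surjective f) {F : Submodule R M}
    (hF : Disjoint F (ker f)) :
    F.toAddSubgroup.index = (F.map f).toAddSubgroup.index * Nat.card (ker f) :=
  AddSubgroup.index_eq_index_map_mul_card_ker (f := f.toAddMonoidHom) hf <| by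
    rw [← ker_toAddSubgroup]
    exact AddSubgroup.disjoint_def.mpr (disjoint_def.mp hF _)

noncomputable def equivMapOfDisjointKer {F : Submodule R M} (hF : Disjoint F (ker f)) :
    F ≃ₗ[R] F.map f :=
  (LinearEquiv.ofInjective (f.domRestrict F) (by simpa [disjoint_iff] using hF)).trans
    (LinearEquiv.ofEq _ _ (range_domRestrict F f))

variable {f} in
theorem apply_apply_of_comp_eq_subtype {P : Submodule R N} {s : P →ₗ[R] M}
    (hs : f ∘ₗ s = P.subtype) (y : P) : f (s y) = y :=
  LinearMap.congr_fun hs y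

noncomputable def sectionEquivLift (P : Submodule R N) :
    {s : P →ₗ[R] M // f ∘ₗ s = P.subtype} ≃
      {F : Submodule R M // Disjoint F (ker f) ∧ F.map f = P} := by
  refine Equiv.ofBijective
    (fun s => ⟨range s.1, ?disjoint, by rw [← range_comp, s.2, P.range_subtype]⟩)
    ⟨fun s₁ s₂ h => ?injective, fun F => ?surjective⟩
  case disjoint =>
    refine disjoint_def.mpr ?_
    rintro _ ⟨y, rfl⟩ hy
    have : y = 0 := Subtype.ext <| (apply_apply_of_comp_eq_subtype s.2 y).symm.trans hy
    simp [this]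
  case injective =>
    have h : range s₁.1 = range s₂.1 := congrArg Subtype.val h
    refine Subtype.ext (LinearMap.ext fun y => ?_)
    obtain ⟨z, hz⟩ : s₁.1 y ∈ range s₂.1 := h ▸ mem_range_self _ y
    have : z = y := Subtype.ext <| by
      rw [← apply_apply_of_comp_eq_subtype s₂.2 z, hz, apply_apply_of_comp_eq_subtype s₁.2 y]
    rw [← hz, this]
  case surjective =>
    obtain ⟨F, hF, hFP⟩ := F
    let e : F ≃ₗ[R] P := (f.equivMapOfDisjointKer hF).trans (LinearEquiv.ofEq _ _ hFP)
    refine ⟨⟨F.subtype ∘ₗ e.symm.toLinearMap, LinearMap.ext fun y => ?_⟩, ?_⟩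
    · exact congrArg Subtype.val (e.apply_symm_apply y)
    · simp [range_comp]

noncomputable def sectionEquivHomKer {P : Submodule R N} (s₀ : P →ₗ[R] M)
    (hs₀ : f ∘ₗ s₀ = P.subtype) :
    {s : P →ₗ[R] M // f ∘ₗ s = P.subtype} ≃ (P →ₗ[R] ker f) where
  toFun s := codRestrict (ker f) (s.1 - s₀) fun y => by
    simp [apply_apply_of_comp_eq_subtype s.2 y, apply_apply_of_comp_eq_subtype hs₀ y]
  invFun g := ⟨s₀ + (ker f).subtype ∘ₗ g, by ext y; simp [apply_apply_of_comp_eq_subtype hs₀ y]⟩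
  left_inv s := by ext; simp
  right_inv g := by ext; simp

end LinearMap

theorem Submodule.free_and_index_eq_mul_card_torsion_iff {R Q : Type*} [CommRing R]
    [IsDomain R] [AddCommGroup Q] [Module R Q] [Finite (torsion R Q)] (F : Submodule R Q)
    (v : ℕ) :
    (Free R F ∧ F.toAddSubgroup.index = v * Nat.card (torsion R Q)) ↔
      Disjoint F (torsion R Q) ∧ Free R (F.map (torsion R Q).mkQ) ∧
        (F.map (torsion R Q).mkQ).toAddSubgroup.index = v := by
  set T := torsion R Q
  have hindex (hF : Disjoint F T) :
      F.toAddSubgroup.index = (F.map T.mkQ).toAddSubgroup.index * Nat.card T := by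
    simpa using T.mkQ.index_eq_index_map_mul_card_ker T.mkQ_surjective (F := F) (by simpa using hF)
  constructor
  · rintro ⟨hF, hFv⟩
    have hdisj := F.disjoint_torsion_of_free
    refine ⟨hdisj, .of_equiv (T.mkQ.equivMapOfDisjointKer (by simpa using hdisj)), ?_⟩
    exact Nat.eq_of_mul_eq_mul_right Nat.card_pos ((hindex hdisj).symm.trans hFv)
  · rintro ⟨hdisj, hfree, hv⟩
    exact ⟨.of_equiv (T.mkQ.equivMapOfDisjointKer (by simpa using hdisj)).symm,
      by rw [hindex hdisj, hv]⟩

/-- Let `𝓞` be the ring of integers of a number field and `Q` a finitely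
generated `𝓞`-module with finite torsion submodule of cardinality `t`; set
`Q̂ = Q/T(Q)` and let `r = rank_ℤ(Q̂)/rank_ℤ(𝓞)`. If `Q̂` has exactly `u` free
`𝓞`-submodules of index `v`, then `Q` has exactly `u·t^r` free `𝓞`-submodules of index
`v·t`. -/
theorem count_free_submodules_of_index
    {K : Type*} [Field K] [NumberField K]
    {Q : Type*} [AddCommGroup Q] [Module (𝓞 K) Q] [Module.Finite (𝓞 K) Q]
    (t : ℕ) [Finite ↥(Submodule.torsion (𝓞 K) Q)]
    (ht : Nat.card ↥(Submodule.torsion (𝓞 K) Q) = t)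
    (r : ℕ)
    (hr : Module.finrank ℤ (Q ⧸ Submodule.torsion (𝓞 K) Q) = r * Module.finrank ℤ (𝓞 K))
    (v : ℕ) (hv : 0 < v) (u : ℕ)
    (hu : Nat.card {F : Submodule (𝓞 K) (Q ⧸ Submodule.torsion (𝓞 K) Q) //
        Module.Free (𝓞 K) ↥F ∧ F.toAddSubgroup.index = v} = u) :
    Nat.card {F : Submodule (𝓞 K) Q //
        Module.Free (𝓞 K) ↥F ∧ F.toAddSubgroup.index = v * t} = u * t ^ r := by
  let T := torsion (𝓞 K) Q
  have : Module.Finite ℤ (Q ⧸ T) := .trans (𝓞 K) _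
  subst ht hu
  refine (Nat.card_subtype_eq_mul_of_fiber_equiv (map T.mkQ) (d := (Disjoint · T))
    (q := fun P => Free (𝓞 K) P ∧ P.toAddSubgroup.index = v) (γ := Fin r → LinearMap.ker T.mkQ)
    (free_and_index_eq_mul_card_torsion_iff · v) fun P ⟨_, hPv⟩ => ?_).trans ?_
  · have hrank : finrank (𝓞 K) P = r := Nat.eq_of_mul_eq_mul_right finrank_pos <|
      (P.finrank_mul_finrank_int_eq_of_index_ne_zero (hPv ▸ hv.ne')).trans hr
    obtain ⟨s₀, hs₀⟩ := projective_lifting_property T.mkQ P.subtype T.mkQ_surjective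
    exact ⟨(Equiv.subtypeEquivRight fun F => by rw [ker_mkQ]).trans <|
      (T.mkQ.sectionEquivLift P).symm.trans <| (T.mkQ.sectionEquivHomKer s₀ hs₀).trans
        ((finBasisOfFinrankEq _ _ hrank).constr ℕ).toEquiv.symm⟩
  · rw [Nat.card_fun, Nat.card_fin, ker_mkQ]
end
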